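/- For every real x ≥ 0, the Lambert W function (the principal branch, i.e., the unique w ≥ 0 with w·e^w = x) satisfies W(x) ≤ ln(x + 1). -/
import Mathlib

/-- For x ≥ 0, the principal branch of the Lambert W function
(the unique w ≥ 0 with w·e^w = x) satisfies W(x) ≤ ln(x + 1). -/
theorem stmt_11 (x w : ℝ) (hx : 0 ≤ x) (hw : 0 ≤ w) (hW : w * Real.exp w = x) :
    w ≤ Real.log (x + 1) := by
  rw [Real.le_log_iff_exp_le (by linarith)]
  have h1 : -w + 1 ≤ Real.exp (-w) := Real.add_one_le_exp (-w)
  have h2 : (1 - w) * Real.exp w ≤ Real.exp (-w) * Real.exp w := by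
    apply mul_le_mul_of_nonneg_right (by linarith) (Real.exp_pos w).le
  rw [← Real.exp_add, neg_add_cancel, Real.exp_zero] at h2
  nlinarith
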